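/- Let c1 > 0 and c2 > 0 and consider the two-player game Γ_2^c in which player 1 has actions {a1,a2,a3}, player 2 has actions {b1,b2,b3}, and payoffs (u_1,u_2) are: (a1,b1)↦(1,1), (a1,b2)↦(0,0), (a1,b3)↦(−7−c1,−7−c2), (a2,b1)↦(0,0), (a2,b2)↦(0,0), (a2,b3)↦(−7,−7), (a3,b1)↦(−7−c1,−7−c2), (a3,b2)↦(−7,−7), (a3,b3)↦(−7,−7). Then the set of empirical equilibria of Γ_2^c equals {(a1,b1)} if min{c1,c2} ≤ 1, and equals {(a1,b1), (a2,b2)} if min{c1,c2} > 1. -/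
import Mathlib


open Filter Topology

section GameDefs

variable {N : Type} [Fintype N] [DecidableEq N] {A : N → Type}
  [∀ i, Fintype (A i)] [∀ i, DecidableEq (A i)]

/-- A mixed-strategy profile: each `σ i` is a probability distribution on `A i`. -/
def IsStrategy (σ : ∀ i, A i → ℝ) : Prop :=
  (∀ i a, 0 ≤ σ i a) ∧ ∀ i, ∑ a, σ i a = 1

/-- An interior profile places positive probability on every action. -/
def Interior (σ : ∀ i, A i → ℝ) : Prop :=
  ∀ i a, 0 < σ i a

/-- Expected utility of player `i` at profile `σ`. -/
noncomputable def expUtil (u : ∀ i : N, (∀ j, A j) → ℝ) (σ : ∀ i, A i → ℝ) (i : N) : ℝ :=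
  ∑ a : ∀ j, A j, u i a * ∏ j, σ j (a j)

/-- Expected utility of player `i` from playing action `ai` against `σ₋ᵢ`. -/
noncomputable def devUtil (u : ∀ i : N, (∀ j, A j) → ℝ) (σ : ∀ i, A i → ℝ)
    (i : N) (ai : A i) : ℝ :=
  expUtil u (Function.update σ i (fun b => if b = ai then (1 : ℝ) else 0)) i

/-- Nash equilibrium. -/
def IsNash (u : ∀ i : N, (∀ j, A j) → ℝ) (σ : ∀ i, A i → ℝ) : Prop :=
  IsStrategy σ ∧ ∀ (i : N) (μ : A i → ℝ), (∀ a, 0 ≤ μ a) → (∑ a, μ a = 1) →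
    expUtil u (Function.update σ i μ) i ≤ expUtil u σ i

/-- Weak payoff monotonicity: differences in behavior reveal differences in payoffs. -/
def WeaklyPayoffMonotone (u : ∀ i : N, (∀ j, A j) → ℝ) (σ : ∀ i, A i → ℝ) : Prop :=
  IsStrategy σ ∧ ∀ (i : N) (ai bi : A i), σ i bi < σ i ai →
    devUtil u σ i bi < devUtil u σ i ai

/-- Payoff monotonicity. -/
def PayoffMonotone (u : ∀ i : N, (∀ j, A j) → ℝ) (σ : ∀ i, A i → ℝ) : Prop :=
  IsStrategy σ ∧ ∀ (i : N) (ai bi : A i),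
    σ i bi ≤ σ i ai ↔ devUtil u σ i bi ≤ devUtil u σ i ai

/-- Pointwise convergence of a sequence of profiles. -/
def ConvergesTo (s : ℕ → ∀ i, A i → ℝ) (σ : ∀ i, A i → ℝ) : Prop :=
  ∀ (i : N) (ai : A i), Tendsto (fun n => s n i ai) atTop (𝓝 (σ i ai))

/-- Empirical equilibrium: a Nash equilibrium that is the limit of weakly payoff
monotone profiles. -/
def IsEmpirical (u : ∀ i : N, (∀ j, A j) → ℝ) (σ : ∀ i, A i → ℝ) : Prop :=
  IsNash u σ ∧ ∃ s : ℕ → ∀ i, A i → ℝ,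
    (∀ n, WeaklyPayoffMonotone u (s n)) ∧ ConvergesTo s σ

/-- Proper equilibrium (Myerson). -/
def IsProper (u : ∀ i : N, (∀ j, A j) → ℝ) (σ : ∀ i, A i → ℝ) : Prop :=
  IsStrategy σ ∧ ∃ s : ℕ → ∀ i, A i → ℝ,
    (∀ n, IsStrategy (s n) ∧ Interior (s n) ∧
      ∀ (i : N) (ai bi : A i),
        devUtil u (s n) i bi < devUtil u (s n) i ai →
          s n i bi ≤ (1 / (n + 1) : ℝ) * s n i ai) ∧
    ConvergesTo s σ

/-- Perfect equilibrium (Selten, in Myerson's formulation). -/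
def IsPerfect (u : ∀ i : N, (∀ j, A j) → ℝ) (σ : ∀ i, A i → ℝ) : Prop :=
  IsStrategy σ ∧ ∃ s : ℕ → ∀ i, A i → ℝ,
    (∀ n, IsStrategy (s n) ∧ Interior (s n) ∧
      ∀ (i : N) (ai : A i), (1 / (n + 1) : ℝ) < s n i ai →
        ∀ bi : A i, devUtil u (s n) i bi ≤ devUtil u (s n) i ai) ∧
    ConvergesTo s σ

/-- `bi` weakly dominates `ai` for player `i`. -/
def WeaklyDominates (u : ∀ i : N, (∀ j, A j) → ℝ) (i : N) (bi ai : A i) : Prop :=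
  (∀ a : ∀ j, A j, u i (Function.update a i ai) ≤ u i (Function.update a i bi)) ∧
  ∃ a : ∀ j, A j, u i (Function.update a i ai) < u i (Function.update a i bi)

/-- Undominated Nash equilibrium. -/
def IsUndominatedNash (u : ∀ i : N, (∀ j, A j) → ℝ) (σ : ∀ i, A i → ℝ) : Prop :=
  IsNash u σ ∧ ∀ (i : N) (ai : A i), 0 < σ i ai →
    ¬ ∃ bi : A i, WeaklyDominates u i bi ai

end GameDefs

/-- A regular quantal response function on a finite set of actions `B`:
interiority, continuity, responsiveness, and monotonicity. -/
def IsRegularQRF {B : Type} [Fintype B] [DecidableEq B]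
    (p : (B → ℝ) → (B → ℝ)) : Prop :=
  (∀ x, (∀ a, 0 < p x a) ∧ ∑ a, p x a = 1) ∧
  Continuous p ∧
  (∀ (x : B → ℝ) (η : ℝ) (a : B), 0 < η →
    p x a < p (Function.update x a (x a + η)) a) ∧
  ∀ (x : B → ℝ) (a b : B), x b < x a → p x b < p x a

section QREDefs

variable {N : Type} [Fintype N] [DecidableEq N] {A : N → Type}
  [∀ i, Fintype (A i)] [∀ i, DecidableEq (A i)]

/-- Quantal response equilibrium with respect to a profile of QRFs `p`. -/
def IsQRE (u : ∀ i : N, (∀ j, A j) → ℝ) (p : ∀ i, (A i → ℝ) → (A i → ℝ))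
    (σ : ∀ i, A i → ℝ) : Prop :=
  ∀ i : N, σ i = p i (fun ai => devUtil u σ i ai)

/-- A sequence of profiles of QRFs is utility maximizing in the limit. -/
def UtilityMaximizingInLimit (u : ∀ i : N, (∀ j, A j) → ℝ)
    (p : ℕ → ∀ i, (A i → ℝ) → (A i → ℝ)) : Prop :=
  ∀ (s : ℕ → ∀ i, A i → ℝ) (σ : ∀ i, A i → ℝ),
    (∀ n, IsQRE u (p n) (s n)) → ConvergesTo s σ → IsNash u σ

/-- `σ` is approachable by regular QRE that are utility maximizing in the limit. -/
def ApproachableByRegularQRE (u : ∀ i : N, (∀ j, A j) → ℝ) (σ : ∀ i, A i → ℝ) : Prop :=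
  ∃ p : ℕ → ∀ i, (A i → ℝ) → (A i → ℝ),
    (∀ n i, IsRegularQRF (p n i)) ∧ UtilityMaximizingInLimit u p ∧
    ∃ s : ℕ → ∀ i, A i → ℝ, (∀ n, IsQRE u (p n) (s n)) ∧ ConvergesTo s σ

end QREDefs

/-- A control cost function (van Damme), bundled with its derivative on `(0,1]`. -/
structure ControlCost where
  f : ℝ → ℝ
  f' : ℝ → ℝ
  hasDeriv : ∀ x ∈ Set.Ioc (0:ℝ) 1, HasDerivWithinAt f (f' x) (Set.Ioc (0:ℝ) 1) x
  contDeriv : ContinuousOn f' (Set.Ioc (0:ℝ) 1)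
  anti : StrictAntiOn f (Set.Ioc (0:ℝ) 1)
  convex : StrictConvexOn ℝ (Set.Ioc (0:ℝ) 1) f
  atOne : f 1 = 0
  blowup : Tendsto f (nhdsWithin 0 (Set.Ioi (0:ℝ))) atTop

/-- The game Γ₂ᶜ (Table 2). Player `0` is player 1 (actions `0 = a1`, `1 = a2`,
`2 = a3`); player `1` is player 2 (actions `0 = b1`, `1 = b2`, `2 = b3`). -/
noncomputable def uGammaC (c1 c2 : ℝ) : ∀ _ : Fin 2, (Fin 2 → Fin 3) → ℝ := fun i a =>
  if i = 0 then
    ![![(1:ℝ), 0, -7 - c1], ![0, 0, -7], ![-7 - c1, -7, -7]] (a 0) (a 1)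
  else
    ![![(1:ℝ), 0, -7 - c2], ![0, 0, -7], ![-7 - c2, -7, -7]] (a 0) (a 1)

section Aux
variable {c1 c2 : ℝ}

lemma sum_pi23 (g : (Fin 2 → Fin 3) → ℝ) :
    ∑ f : Fin 2 → Fin 3, g f = ∑ x : Fin 3, ∑ y : Fin 3, g ![x, y] := by
  rw [← Equiv.sum_comp (finTwoArrowEquiv (Fin 3)).symm g, Fintype.sum_prod_type]
  simp [finTwoArrowEquiv]

lemma expU0 (σ : ∀ _ : Fin 2, Fin 3 → ℝ) :
    expUtil (uGammaC c1 c2) σ 0 =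
      σ 0 0 * σ 1 0 + (-7 - c1) * (σ 0 0 * σ 1 2) + (-7) * (σ 0 1 * σ 1 2)
        + (-7 - c1) * (σ 0 2 * σ 1 0) + (-7) * (σ 0 2 * σ 1 1) + (-7) * (σ 0 2 * σ 1 2) := by
  rw [expUtil, sum_pi23]
  simp only [uGammaC, Fin.sum_univ_three, Fin.prod_univ_two, Matrix.cons_val_zero,
    Matrix.cons_val_one, Matrix.cons_val_two, Matrix.head_cons, Matrix.tail_cons,
    eq_self_iff_true, if_true]
  ring

lemma expU1 (σ : ∀ _ : Fin 2, Fin 3 → ℝ) :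
    expUtil (uGammaC c1 c2) σ 1 =
      σ 0 0 * σ 1 0 + (-7 - c2) * (σ 0 0 * σ 1 2) + (-7) * (σ 0 1 * σ 1 2)
        + (-7 - c2) * (σ 0 2 * σ 1 0) + (-7) * (σ 0 2 * σ 1 1) + (-7) * (σ 0 2 * σ 1 2) := by
  rw [expUtil, sum_pi23]
  simp only [uGammaC, Fin.sum_univ_three, Fin.prod_univ_two, Matrix.cons_val_zero,
    Matrix.cons_val_one, Matrix.cons_val_two, Matrix.head_cons, Matrix.tail_cons,
    eq_self_iff_true, if_true]
  norm_num
  ring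

lemma dev00 (σ : ∀ _ : Fin 2, Fin 3 → ℝ) :
    devUtil (uGammaC c1 c2) σ 0 0 = σ 1 0 + (-7 - c1) * σ 1 2 := by
  rw [devUtil, expU0]
  simp [Function.update]

lemma dev01 (σ : ∀ _ : Fin 2, Fin 3 → ℝ) :
    devUtil (uGammaC c1 c2) σ 0 1 = (-7) * σ 1 2 := by
  rw [devUtil, expU0]
  simp [Function.update]

lemma dev02 (σ : ∀ _ : Fin 2, Fin 3 → ℝ) :
    devUtil (uGammaC c1 c2) σ 0 2 = (-7 - c1) * σ 1 0 + (-7) * σ 1 1 + (-7) * σ 1 2 := by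
  rw [devUtil, expU0]
  simp [Function.update]

lemma dev10 (σ : ∀ _ : Fin 2, Fin 3 → ℝ) :
    devUtil (uGammaC c1 c2) σ 1 0 = σ 0 0 + (-7 - c2) * σ 0 2 := by
  rw [devUtil, expU1]
  simp [Function.update]

lemma dev11 (σ : ∀ _ : Fin 2, Fin 3 → ℝ) :
    devUtil (uGammaC c1 c2) σ 1 1 = (-7) * σ 0 2 := by
  rw [devUtil, expU1]
  simp [Function.update]

lemma dev12 (σ : ∀ _ : Fin 2, Fin 3 → ℝ) :
    devUtil (uGammaC c1 c2) σ 1 2 = (-7 - c2) * σ 0 0 + (-7) * σ 0 1 + (-7) * σ 0 2 := by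
  rw [devUtil, expU1]
  simp [Function.update]
end Aux
section Aux2
variable {c1 c2 : ℝ}

lemma pure_dev_le {N : Type} [Fintype N] [DecidableEq N] {A : N → Type}
    [∀ i, Fintype (A i)] [∀ i, DecidableEq (A i)]
    (u : ∀ i : N, (∀ j, A j) → ℝ) (σ : ∀ i, A i → ℝ) (h : IsNash u σ) (i : N) (a : A i) :
    devUtil u σ i a ≤ expUtil u σ i :=
  h.2 i (fun b => if b = a then 1 else 0) (fun b => by positivity) (by simp)

lemma strat_facts (σ : ∀ _ : Fin 2, Fin 3 → ℝ) (hσ : IsStrategy σ) (i : Fin 2) :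
    σ i 0 + σ i 1 + σ i 2 = 1 ∧ 0 ≤ σ i 0 ∧ 0 ≤ σ i 1 ∧ 0 ≤ σ i 2 := by
  have := hσ.2 i
  rw [Fin.sum_univ_three] at this
  exact ⟨this, hσ.1 i 0, hσ.1 i 1, hσ.1 i 2⟩

lemma slack3 {E x0 x1 x2 p0 p1 p2 : ℝ} (h0 : x0 ≤ E) (h1 : x1 ≤ E) (h2 : x2 ≤ E)
    (hp0 : 0 ≤ p0) (hp1 : 0 ≤ p1) (hp2 : 0 < p2) (hs : p0 + p1 + p2 = 1)
    (hE : p0 * x0 + p1 * x1 + p2 * x2 = E) : x2 = E := by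
  have sum0 : p0 * (E - x0) + p1 * (E - x1) + p2 * (E - x2) = 0 := by
    linear_combination E * hs - hE
  have t0 := mul_nonneg hp0 (sub_nonneg.mpr h0)
  have t1 := mul_nonneg hp1 (sub_nonneg.mpr h1)
  have t2 : p2 * (E - x2) = 0 :=
    le_antisymm (by linarith) (mul_nonneg hp2.le (sub_nonneg.mpr h2))
  rcases mul_eq_zero.mp t2 with h | h
  · exact absurd h (ne_of_gt hp2)
  · linarith [sub_eq_zero.mp h]

/-- From `y1 ≤ y2` (formulas) conclude `p2 = 1` and `p0 = 0`. -/
lemma branch_y {c p0 p1 p2 : ℝ} (hc : 0 < c) (hp0 : 0 ≤ p0) (hp1 : 0 ≤ p1) (hp2 : 0 ≤ p2)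
    (hs : p0 + p1 + p2 = 1)
    (h : (-7 : ℝ) * p2 ≤ (-7 - c) * p0 + (-7) * p1 + (-7) * p2) : p2 = 1 ∧ p0 = 0 := by
  have e1 : c * p0 + 7 ≤ 7 * p2 := by nlinarith
  have hp2le : p2 ≤ 1 := by linarith
  have e2 : c * p0 ≤ 0 := by linarith
  have hp0z : p0 = 0 := le_antisymm (by nlinarith) hp0
  refine ⟨le_antisymm hp2le ?_, hp0z⟩
  rw [hp0z] at e1; nlinarith

lemma nash_cases (hc1 : 0 < c1) (hc2 : 0 < c2) (σ : ∀ _ : Fin 2, Fin 3 → ℝ)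
    (h : IsNash (uGammaC c1 c2) σ) :
    (σ 0 0 = 1 ∧ σ 1 0 = 1) ∨ (σ 0 1 = 1 ∧ σ 1 1 = 1) ∨ (σ 0 2 = 1 ∧ σ 1 2 = 1) := by
  obtain ⟨hs0, hp0, hp1, hp2⟩ := strat_facts σ h.1 0
  obtain ⟨hs1, hq0, hq1, hq2⟩ := strat_facts σ h.1 1
  have hx0 := pure_dev_le _ _ h 0 0
  have hx1 := pure_dev_le _ _ h 0 1
  have hx2 := pure_dev_le _ _ h 0 2
  have hy0 := pure_dev_le _ _ h 1 0
  have hy1 := pure_dev_le _ _ h 1 1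
  have hy2 := pure_dev_le _ _ h 1 2
  rw [dev00 σ] at hx0; rw [dev01 σ] at hx1; rw [dev02 σ] at hx2
  rw [dev10 σ] at hy0; rw [dev11 σ] at hy1; rw [dev12 σ] at hy2
  have hEx : σ 0 0 * (σ 1 0 + (-7 - c1) * σ 1 2) + σ 0 1 * ((-7) * σ 1 2)
      + σ 0 2 * ((-7 - c1) * σ 1 0 + (-7) * σ 1 1 + (-7) * σ 1 2)
      = expUtil (uGammaC c1 c2) σ 0 := by rw [expU0]; ring
  have hEy : σ 1 0 * (σ 0 0 + (-7 - c2) * σ 0 2) + σ 1 1 * ((-7) * σ 0 2)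
      + σ 1 2 * ((-7 - c2) * σ 0 0 + (-7) * σ 0 1 + (-7) * σ 0 2)
      = expUtil (uGammaC c1 c2) σ 1 := by rw [expU1]; ring
  have key2 : 0 < σ 1 2 → σ 0 2 = 1 ∧ σ 0 0 = 0 := by
    intro hQ2
    have heq := slack3 hy0 hy1 hy2 hq0 hq1 hQ2 hs1 hEy
    have h71 : (-7 : ℝ) * σ 0 2 ≤ (-7 - c2) * σ 0 0 + (-7) * σ 0 1 + (-7) * σ 0 2 := by
      rw [heq]; exact hy1
    exact branch_y hc2 hp0 hp1 hp2 hs0 h71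
  by_cases hP2 : 0 < σ 0 2
  · have heq := slack3 hx0 hx1 hx2 hp0 hp1 hP2 hs0 hEx
    have h71 : (-7 : ℝ) * σ 1 2 ≤ (-7 - c1) * σ 1 0 + (-7) * σ 1 1 + (-7) * σ 1 2 := by
      rw [heq]; exact hx1
    obtain ⟨hq2one, _⟩ := branch_y hc1 hq0 hq1 hq2 hs1 h71
    exact Or.inr (Or.inr ⟨(key2 (by linarith)).1, hq2one⟩)
  · have hp2z : σ 0 2 = 0 := le_antisymm (not_lt.mp hP2) hp2
    by_cases hQ2 : 0 < σ 1 2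
    · exact absurd (key2 hQ2).1 (by rw [hp2z]; norm_num)
    · have hq2z : σ 1 2 = 0 := le_antisymm (not_lt.mp hQ2) hq2
      by_cases hP0 : 0 < σ 0 0
      · left
        have hE2 : expUtil (uGammaC c1 c2) σ 1 = σ 1 0 * σ 0 0 := by
          rw [← hEy, hq2z, hp2z]; ring
        rw [hE2, hp2z] at hy0
        have hq0one : σ 1 0 = 1 := by nlinarith
        have hE1 : expUtil (uGammaC c1 c2) σ 0 = σ 0 0 * σ 1 0 := by
          rw [← hEx, hq2z, hp2z]; ring
        rw [hE1, hq0one, hq2z] at hx0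
        have hp0one : σ 0 0 = 1 := by nlinarith
        exact ⟨hp0one, hq0one⟩
      · have hp0z : σ 0 0 = 0 := le_antisymm (not_lt.mp hP0) hp0
        right; left
        have hE1 : expUtil (uGammaC c1 c2) σ 0 = 0 := by
          rw [← hEx, hq2z, hp2z, hp0z]; ring
        rw [hE1, hq2z] at hx0
        have hq0z : σ 1 0 = 0 := by nlinarith
        constructor <;> linarith
end Aux2
section Aux3
variable {c1 c2 : ℝ}

lemma not_e33 (hc1 : 0 < c1) (σ : ∀ _ : Fin 2, Fin 3 → ℝ) (hσ : IsStrategy σ)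
    (h2 : σ 0 2 = 1) (s : ℕ → ∀ _ : Fin 2, Fin 3 → ℝ)
    (hwpm : ∀ n, WeaklyPayoffMonotone (uGammaC c1 c2) (s n))
    (hconv : ConvergesTo s σ) : False := by
  obtain ⟨hs0, hp0, hp1, hp2⟩ := strat_facts σ hσ 0
  have h01 : σ 0 1 = 0 := by linarith
  have ht : Filter.Tendsto (fun n => s n 0 2 - s n 0 1) Filter.atTop (nhds 1) := by
    have := (hconv 0 2).sub (hconv 0 1)
    rw [h2, h01] at this
    simpa using this
  obtain ⟨n, hn⟩ := (ht.eventually (eventually_gt_nhds (by norm_num : (0:ℝ) < 1))).exists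
  obtain ⟨hsn, hmono⟩ := hwpm n
  have hkey := hmono 0 2 1 (by linarith)
  rw [dev01, dev02] at hkey
  obtain ⟨hq, hq0, hq1, hq2⟩ := strat_facts (s n) hsn 1
  nlinarith [mul_nonneg hc1.le hq0]

lemma not_e22_low (hc1 : 0 < c1) (hc2 : 0 < c2) (hmin : c1 ≤ 1 ∨ c2 ≤ 1)
    (σ : ∀ _ : Fin 2, Fin 3 → ℝ) (hσ : IsStrategy σ)
    (h1 : σ 0 1 = 1) (h2 : σ 1 1 = 1) (s : ℕ → ∀ _ : Fin 2, Fin 3 → ℝ)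
    (hwpm : ∀ n, WeaklyPayoffMonotone (uGammaC c1 c2) (s n))
    (hconv : ConvergesTo s σ) : False := by
  obtain ⟨hs0, hp0, hp1, hp2⟩ := strat_facts σ hσ 0
  obtain ⟨hs1, hq0, hq1, hq2⟩ := strat_facts σ hσ 1
  have z00 : σ 0 0 = 0 := by linarith
  have z02 : σ 0 2 = 0 := by linarith
  have z10 : σ 1 0 = 0 := by linarith
  have z12 : σ 1 2 = 0 := by linarith
  rcases hmin with hle | hle
  · -- c1 ≤ 1
    have ht1 : Filter.Tendsto (fun n => s n 0 1 - s n 0 0) Filter.atTop (nhds 1) := by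
      have := (hconv 0 1).sub (hconv 0 0); rw [h1, z00] at this; simpa using this
    have ht2 : Filter.Tendsto (fun n => (7 + c2) * s n 0 2) Filter.atTop (nhds 0) := by
      have := (hconv 0 2).const_mul (7 + c2); rw [z02] at this; simpa using this
    obtain ⟨n, hn1, hn2⟩ :=
      ((ht1.eventually (eventually_gt_nhds (by norm_num : (0:ℝ) < 1))).and
        (ht2.eventually (eventually_lt_nhds (by norm_num : (0:ℝ) < 7)))).exists
    obtain ⟨hsn, hmono⟩ := hwpm n
    obtain ⟨hsp, hsp0, hsp1, hsp2⟩ := strat_facts (s n) hsn 0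
    obtain ⟨hsq, hsq0, hsq1, hsq2⟩ := strat_facts (s n) hsn 1
    have k1 := hmono 0 1 0 (by linarith)
    rw [dev00, dev01] at k1
    -- q0 < c1 * q2 ≤ q2
    have k2 : s n 1 0 < s n 1 2 := by nlinarith
    have k3 := hmono 1 2 0 k2
    rw [dev10, dev12] at k3
    nlinarith [mul_nonneg hc2.le hsp0]
  · -- c2 ≤ 1
    have ht1 : Filter.Tendsto (fun n => s n 1 1 - s n 1 0) Filter.atTop (nhds 1) := by
      have := (hconv 1 1).sub (hconv 1 0); rw [h2, z10] at this; simpa using this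
    have ht2 : Filter.Tendsto (fun n => (7 + c1) * s n 1 2) Filter.atTop (nhds 0) := by
      have := (hconv 1 2).const_mul (7 + c1); rw [z12] at this; simpa using this
    obtain ⟨n, hn1, hn2⟩ :=
      ((ht1.eventually (eventually_gt_nhds (by norm_num : (0:ℝ) < 1))).and
        (ht2.eventually (eventually_lt_nhds (by norm_num : (0:ℝ) < 7)))).exists
    obtain ⟨hsn, hmono⟩ := hwpm n
    obtain ⟨hsp, hsp0, hsp1, hsp2⟩ := strat_facts (s n) hsn 0
    obtain ⟨hsq, hsq0, hsq1, hsq2⟩ := strat_facts (s n) hsn 1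
    have k1 := hmono 1 1 0 (by linarith)
    rw [dev10, dev11] at k1
    have k2 : s n 0 0 < s n 0 2 := by nlinarith
    have k3 := hmono 0 2 0 k2
    rw [dev00, dev02] at k3
    nlinarith [mul_nonneg hc1.le hsq0]
end Aux3
section Aux4

noncomputable def dseq (c1 c2 : ℝ) (n : ℕ) : ℝ := 1 / (4 * (1 + c1 + c2) * (n + 1))

variable {c1 c2 : ℝ}

lemma dseq_pos (hc1 : 0 < c1) (hc2 : 0 < c2) (n : ℕ) : 0 < dseq c1 c2 n := by
  unfold dseq; positivity

lemma dseq_le (hc1 : 0 < c1) (hc2 : 0 < c2) (n : ℕ) : dseq c1 c2 n ≤ 1 / 4 := by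
  unfold dseq
  rw [div_le_div_iff₀ (by positivity) (by norm_num)]
  nlinarith [Nat.cast_nonneg (α := ℝ) n]

lemma dseq_c1 (hc1 : 0 < c1) (hc2 : 0 < c2) (n : ℕ) : c1 * dseq c1 c2 n ≤ 1 / 4 := by
  unfold dseq
  rw [mul_one_div, div_le_div_iff₀ (by positivity) (by norm_num)]
  nlinarith [Nat.cast_nonneg (α := ℝ) n, mul_nonneg (mul_nonneg (by norm_num : (0:ℝ) ≤ 4) (by nlinarith : (0:ℝ) ≤ 1 + c1 + c2)) (Nat.cast_nonneg (α := ℝ) n)]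

lemma dseq_c2 (hc1 : 0 < c1) (hc2 : 0 < c2) (n : ℕ) : c2 * dseq c1 c2 n ≤ 1 / 4 := by
  unfold dseq
  rw [mul_one_div, div_le_div_iff₀ (by positivity) (by norm_num)]
  nlinarith [Nat.cast_nonneg (α := ℝ) n, mul_nonneg (mul_nonneg (by norm_num : (0:ℝ) ≤ 4) (by nlinarith : (0:ℝ) ≤ 1 + c1 + c2)) (Nat.cast_nonneg (α := ℝ) n)]

lemma dseq_tendsto (hc1 : 0 < c1) (hc2 : 0 < c2) :
    Filter.Tendsto (dseq c1 c2) Filter.atTop (nhds 0) := by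
  have h := tendsto_one_div_add_atTop_nhds_zero_nat.const_mul (1 / (4 * (1 + c1 + c2)))
  rw [mul_zero] at h
  have he : dseq c1 c2 = fun n : ℕ => 1 / (4 * (1 + c1 + c2)) * (1 / ((n:ℝ) + 1)) := by
    funext n
    unfold dseq
    rw [div_mul_div_comm, one_mul]
  rw [he]
  exact h

end Aux4
section Aux5

lemma fin2cases (i : Fin 2) : i = 0 ∨ i = 1 := by omega
lemma fin3cases (a : Fin 3) : a = 0 ∨ a = 1 ∨ a = 2 := by omega

variable {c1 c2 : ℝ}

lemma wpm_e11 (hc1 : 0 < c1) (hc2 : 0 < c2) {d : ℝ} (hd0 : 0 < d) (hd4 : d ≤ 1/4)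
    (hdc1 : c1 * d ≤ 1/4) (hdc2 : c2 * d ≤ 1/4) :
    WeaklyPayoffMonotone (uGammaC c1 c2)
      (fun _ => ![1 - d - d * d, d, d * d]) := by
  have hdd : d * d ≤ 1/4 * d := mul_le_mul_of_nonneg_right hd4 hd0.le
  have hcd1 : c1 * d * d ≤ 1/4 * d := mul_le_mul_of_nonneg_right hdc1 hd0.le
  have hcd2 : c2 * d * d ≤ 1/4 * d := mul_le_mul_of_nonneg_right hdc2 hd0.le
  constructor
  · constructor
    · intro i a
      rcases fin3cases a with rfl | rfl | rfl <;>
        simp only [Matrix.cons_val_zero, Matrix.cons_val_one, Matrix.cons_val_two,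
          Matrix.head_cons, Matrix.tail_cons] <;> nlinarith
    · intro i
      rw [Fin.sum_univ_three]
      simp only [Matrix.cons_val_zero, Matrix.cons_val_one, Matrix.cons_val_two,
        Matrix.head_cons, Matrix.tail_cons]
      ring
  · intro i ai bi hlt
    rcases fin2cases i with rfl | rfl <;> rcases fin3cases ai with rfl | rfl | rfl <;>
      rcases fin3cases bi with rfl | rfl | rfl <;>
      simp only [dev00, dev01, dev02, dev10, dev11, dev12, Matrix.cons_val_zero,
        Matrix.cons_val_one, Matrix.cons_val_two, Matrix.head_cons, Matrix.tail_cons]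
        at hlt ⊢ <;>
      nlinarith

lemma wpm_e22 (hc1 : 1 < c1) (hc2 : 1 < c2) {d : ℝ} (hd0 : 0 < d) (hd4 : d ≤ 1/4) :
    WeaklyPayoffMonotone (uGammaC c1 c2)
      (fun _ => ![d, 1 - 2 * d, d]) := by
  constructor
  · constructor
    · intro i a
      rcases fin3cases a with rfl | rfl | rfl <;>
        simp only [Matrix.cons_val_zero, Matrix.cons_val_one, Matrix.cons_val_two,
          Matrix.head_cons, Matrix.tail_cons] <;> nlinarith
    · intro i
      rw [Fin.sum_univ_three]
      simp only [Matrix.cons_val_zero, Matrix.cons_val_one, Matrix.cons_val_two,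
        Matrix.head_cons, Matrix.tail_cons]
      ring
  · intro i ai bi hlt
    rcases fin2cases i with rfl | rfl <;> rcases fin3cases ai with rfl | rfl | rfl <;>
      rcases fin3cases bi with rfl | rfl | rfl <;>
      simp only [dev00, dev01, dev02, dev10, dev11, dev12, Matrix.cons_val_zero,
        Matrix.cons_val_one, Matrix.cons_val_two, Matrix.head_cons, Matrix.tail_cons]
        at hlt ⊢ <;>
      nlinarith

lemma emp_e11 (hc1 : 0 < c1) (hc2 : 0 < c2) (σ : ∀ _ : Fin 2, Fin 3 → ℝ)
    (hσ : IsStrategy σ) (h0 : σ 0 0 = 1) (h1 : σ 1 0 = 1) :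
    IsEmpirical (uGammaC c1 c2) σ := by
  obtain ⟨hs0, hp0, hp1, hp2⟩ := strat_facts σ hσ 0
  obtain ⟨hs1, hq0, hq1, hq2⟩ := strat_facts σ hσ 1
  have z01 : σ 0 1 = 0 := by linarith
  have z02 : σ 0 2 = 0 := by linarith
  have z11 : σ 1 1 = 0 := by linarith
  have z12 : σ 1 2 = 0 := by linarith
  refine ⟨⟨hσ, ?_⟩, ?_⟩
  · intro i μ hμ hμs
    rw [Fin.sum_univ_three] at hμs
    have hμ0 := hμ 0
    have hμ1 := hμ 1
    have hμ2 := hμ 2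
    rcases fin2cases i with rfl | rfl
    · rw [expU0, expU0]
      simp only [Function.update_self, Function.update_of_ne (by decide : (1:Fin 2) ≠ 0)]
      rw [h0, h1, z01, z02, z11, z12]
      nlinarith [mul_nonneg hc1.le hμ2]
    · rw [expU1, expU1]
      simp only [Function.update_self, Function.update_of_ne (by decide : (0:Fin 2) ≠ 1)]
      rw [h0, h1, z01, z02, z11, z12]
      nlinarith [mul_nonneg hc2.le hμ2]
  · refine ⟨fun n _ => ![1 - dseq c1 c2 n - dseq c1 c2 n * dseq c1 c2 n,
      dseq c1 c2 n, dseq c1 c2 n * dseq c1 c2 n], fun n =>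
        wpm_e11 hc1 hc2 (dseq_pos hc1 hc2 n) (dseq_le hc1 hc2 n)
          (dseq_c1 hc1 hc2 n) (dseq_c2 hc1 hc2 n), ?_⟩
    intro i ai
    have htd := dseq_tendsto hc1 hc2
    have hca : ∀ k : Fin 3, σ i k = ![(1:ℝ), 0, 0] k := by
      intro k
      rcases fin2cases i with rfl | rfl <;> rcases fin3cases k with rfl | rfl | rfl <;>
        simp [h0, h1, z01, z02, z11, z12]
    rcases fin3cases ai with rfl | rfl | rfl <;> rw [hca] <;>
      simp only [Matrix.cons_val_zero, Matrix.cons_val_one, Matrix.cons_val_two,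
        Matrix.head_cons, Matrix.tail_cons]
    · have := (tendsto_const_nhds (x := (1:ℝ)) (f := Filter.atTop (α := ℕ))).sub
        (htd.add (htd.mul htd))
      simpa [sub_sub] using this
    · simpa using htd
    · simpa using htd.mul htd

lemma emp_e22 (hc1 : 1 < c1) (hc2 : 1 < c2) (σ : ∀ _ : Fin 2, Fin 3 → ℝ)
    (hσ : IsStrategy σ) (h0 : σ 0 1 = 1) (h1 : σ 1 1 = 1) :
    IsEmpirical (uGammaC c1 c2) σ := by
  have hc1' : (0:ℝ) < c1 := by linarith
  have hc2' : (0:ℝ) < c2 := by linarith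
  obtain ⟨hs0, hp0, hp1, hp2⟩ := strat_facts σ hσ 0
  obtain ⟨hs1, hq0, hq1, hq2⟩ := strat_facts σ hσ 1
  have z00 : σ 0 0 = 0 := by linarith
  have z02 : σ 0 2 = 0 := by linarith
  have z10 : σ 1 0 = 0 := by linarith
  have z12 : σ 1 2 = 0 := by linarith
  refine ⟨⟨hσ, ?_⟩, ?_⟩
  · intro i μ hμ hμs
    rw [Fin.sum_univ_three] at hμs
    have hμ0 := hμ 0
    have hμ1 := hμ 1
    have hμ2 := hμ 2
    rcases fin2cases i with rfl | rfl
    · rw [expU0, expU0]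
      simp only [Function.update_self, Function.update_of_ne (by decide : (1:Fin 2) ≠ 0)]
      rw [h0, h1, z00, z02, z10, z12]
      nlinarith
    · rw [expU1, expU1]
      simp only [Function.update_self, Function.update_of_ne (by decide : (0:Fin 2) ≠ 1)]
      rw [h0, h1, z00, z02, z10, z12]
      nlinarith
  · refine ⟨fun n _ => ![dseq c1 c2 n, 1 - 2 * dseq c1 c2 n, dseq c1 c2 n],
      fun n => wpm_e22 hc1 hc2 (dseq_pos hc1' hc2' n) (dseq_le hc1' hc2' n), ?_⟩
    intro i ai
    have htd := dseq_tendsto hc1' hc2'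
    have hca : ∀ k : Fin 3, σ i k = ![(0:ℝ), 1, 0] k := by
      intro k
      rcases fin2cases i with rfl | rfl <;> rcases fin3cases k with rfl | rfl | rfl <;>
        simp [h0, h1, z00, z02, z10, z12]
    rcases fin3cases ai with rfl | rfl | rfl <;> rw [hca] <;>
      simp only [Matrix.cons_val_zero, Matrix.cons_val_one, Matrix.cons_val_two,
        Matrix.head_cons, Matrix.tail_cons]
    · simpa using htd
    · have := (tendsto_const_nhds (x := (1:ℝ)) (f := Filter.atTop (α := ℕ))).sub
        (htd.const_mul 2)
      simpa [mul_comm] using this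
    · simpa using htd
end Aux5
/-- for c1, c2 > 0, the empirical equilibria of Γ₂ᶜ are exactly
{(a1,b1)} when min{c1,c2} ≤ 1, and exactly {(a1,b1),(a2,b2)} when min{c1,c2} > 1. -/
theorem gammaC_empirical_set (c1 c2 : ℝ) (hc1 : 0 < c1) (hc2 : 0 < c2)
    (σ : ∀ _ : Fin 2, Fin 3 → ℝ) (hσ : IsStrategy σ) :
    (min c1 c2 ≤ 1 →
      (IsEmpirical (uGammaC c1 c2) σ ↔ (σ 0 0 = 1 ∧ σ 1 0 = 1))) ∧
    (1 < min c1 c2 →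
      (IsEmpirical (uGammaC c1 c2) σ ↔
        ((σ 0 0 = 1 ∧ σ 1 0 = 1) ∨ (σ 0 1 = 1 ∧ σ 1 1 = 1)))) := by
  constructor
  · intro hmin
    constructor
    · rintro ⟨hN, s, hwpm, hconv⟩
      rcases nash_cases hc1 hc2 σ hN with h | h | h
      · exact h
      · exact absurd (not_e22_low hc1 hc2 (min_le_iff.mp hmin) σ hσ h.1 h.2 s hwpm hconv) not_false
      · exact absurd (not_e33 hc1 σ hσ h.1 s hwpm hconv) not_false
    · rintro ⟨h0, h1⟩
      exact emp_e11 hc1 hc2 σ hσ h0 h1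
  · intro hmin
    rw [lt_min_iff] at hmin
    constructor
    · rintro ⟨hN, s, hwpm, hconv⟩
      rcases nash_cases hc1 hc2 σ hN with h | h | h
      · exact Or.inl h
      · exact Or.inr h
      · exact absurd (not_e33 hc1 σ hσ h.1 s hwpm hconv) not_false
    · rintro (⟨h0, h1⟩ | ⟨h0, h1⟩)
      · exact emp_e11 hc1 hc2 σ hσ h0 h1
      · exact emp_e22 hmin.1 hmin.2 σ hσ h0 h1
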